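/- Let A be an algebraic quantum group with left integral φ and dual Â. Let A ◇ Â denote the vector space A ⊗ Â with product (a ◇ b)(a' ◇ b') = ⟨a', b⟩ a ◇ b'. Then the map γ : A # Â → A ◇ Â defined by γ(a # φ(c ·)) = Σ aS(c₍₁₎) ◇ φ(c₍₂₎ ·) is an isomorphism of algebras. -/

import Mathlib

/-! # A framework for (regular) multiplier Hopf algebras, following
Drabant–Van Daele–Zhang, "Actions of Multiplier Hopf Algebras".

Algebras are (possibly non-unital) associative algebras over `ℂ` with
non-degenerate product.  A multiplier of such an algebra (whose multiplication
is recorded as a bilinear map `mul`) is a pair `(L, R)` of linear maps with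
`L (x*y) = L x * y`, `R (x*y) = x * R y` and `x * L y = R x * y`; this is the
standard description of the multiplier algebra `M(A)`.

A regular multiplier Hopf algebra is recorded by the comultiplication
`Δ : A → M(A ⊗ A)` together with the four canonical maps
`T1 a b = Δ(a)(1 ⊗ b)`, `T2 a b = (a ⊗ 1)Δ(b)`, `T3 a b = Δ(a)(b ⊗ 1)`,
`T4 a b = (1 ⊗ a)Δ(b)` (all with values in `A ⊗ A`), which are required to be
bijective as maps of `A ⊗ A`; together with the counit and the (bijective)
antipode satisfying the usual axioms, expressed in covered (Sweedler) form. -/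

open scoped TensorProduct
open TensorProduct LinearMap

noncomputable section

/-! ## Multipliers -/

section MulPair

variable {X : Type*} [AddCommGroup X] [Module ℂ X]

/-- A multiplier of the (possibly non-unital) algebra `(X, mul)`. -/
@[ext]
structure MulPair (mul : X →ₗ[ℂ] X →ₗ[ℂ] X) : Type _ where
  L : X →ₗ[ℂ] X
  R : X →ₗ[ℂ] X
  L_mul : ∀ x y : X, L (mul x y) = mul (L x) y
  R_mul : ∀ x y : X, R (mul x y) = mul x (R y)
  middle : ∀ x y : X, mul x (L y) = mul (R x) y

namespace MulPair

variable {mul : X →ₗ[ℂ] X →ₗ[ℂ] X}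

instance : One (MulPair mul) :=
  ⟨⟨LinearMap.id, LinearMap.id, fun _ _ => rfl, fun _ _ => rfl, fun _ _ => rfl⟩⟩

@[simp] theorem one_L : (1 : MulPair mul).L = LinearMap.id := rfl
@[simp] theorem one_R : (1 : MulPair mul).R = LinearMap.id := rfl

instance : Mul (MulPair mul) :=
  ⟨fun m n =>
    ⟨m.L ∘ₗ n.L, n.R ∘ₗ m.R,
      fun x y => by simp [n.L_mul, m.L_mul],
      fun x y => by simp [m.R_mul, n.R_mul],
      fun x y => by simp [m.middle, n.middle]⟩⟩

@[simp] theorem mul_L (m n : MulPair mul) : (m * n).L = m.L ∘ₗ n.L := rfl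
@[simp] theorem mul_R (m n : MulPair mul) : (m * n).R = n.R ∘ₗ m.R := rfl

instance : Zero (MulPair mul) :=
  ⟨⟨0, 0, fun x y => by simp, fun x y => by simp, fun x y => by simp⟩⟩

@[simp] theorem zero_L : (0 : MulPair mul).L = 0 := rfl
@[simp] theorem zero_R : (0 : MulPair mul).R = 0 := rfl

instance : Add (MulPair mul) :=
  ⟨fun m n =>
    ⟨m.L + n.L, m.R + n.R,
      fun x y => by simp [m.L_mul, n.L_mul],
      fun x y => by simp [m.R_mul, n.R_mul],
      fun x y => by simp [m.middle, n.middle]⟩⟩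

@[simp] theorem add_L (m n : MulPair mul) : (m + n).L = m.L + n.L := rfl
@[simp] theorem add_R (m n : MulPair mul) : (m + n).R = m.R + n.R := rfl

instance : Neg (MulPair mul) :=
  ⟨fun m =>
    ⟨-m.L, -m.R,
      fun x y => by simp [m.L_mul],
      fun x y => by simp [m.R_mul],
      fun x y => by simp [m.middle]⟩⟩

@[simp] theorem neg_L (m : MulPair mul) : (-m).L = -m.L := rfl
@[simp] theorem neg_R (m : MulPair mul) : (-m).R = -m.R := rfl

instance : Sub (MulPair mul) :=
  ⟨fun m n =>
    ⟨m.L - n.L, m.R - n.R,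
      fun x y => by simp [m.L_mul, n.L_mul, sub_eq_add_neg],
      fun x y => by simp [m.R_mul, n.R_mul, sub_eq_add_neg],
      fun x y => by simp [m.middle, n.middle, sub_eq_add_neg]⟩⟩

@[simp] theorem sub_L (m n : MulPair mul) : (m - n).L = m.L - n.L := rfl
@[simp] theorem sub_R (m n : MulPair mul) : (m - n).R = m.R - n.R := rfl

instance : SMul ℂ (MulPair mul) :=
  ⟨fun c m =>
    ⟨c • m.L, c • m.R,
      fun x y => by simp [m.L_mul],
      fun x y => by simp [m.R_mul],
      fun x y => by simp [m.middle]⟩⟩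

@[simp] theorem smul_L (c : ℂ) (m : MulPair mul) : (c • m).L = c • m.L := rfl
@[simp] theorem smul_R (c : ℂ) (m : MulPair mul) : (c • m).R = c • m.R := rfl

instance : SMul ℕ (MulPair mul) :=
  ⟨fun n m =>
    ⟨n • m.L, n • m.R,
      fun x y => by simp [m.L_mul],
      fun x y => by simp [m.R_mul],
      fun x y => by simp [m.middle]⟩⟩

@[simp] theorem nsmul_L (n : ℕ) (m : MulPair mul) : (n • m).L = n • m.L := rfl
@[simp] theorem nsmul_R (n : ℕ) (m : MulPair mul) : (n • m).R = n • m.R := rfl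

instance : SMul ℤ (MulPair mul) :=
  ⟨fun n m =>
    ⟨n • m.L, n • m.R,
      fun x y => by simp [m.L_mul],
      fun x y => by simp [m.R_mul],
      fun x y => by simp [m.middle]⟩⟩

@[simp] theorem zsmul_L (n : ℤ) (m : MulPair mul) : (n • m).L = n • m.L := rfl
@[simp] theorem zsmul_R (n : ℤ) (m : MulPair mul) : (n • m).R = n • m.R := rfl

/-- The underlying pair of linear maps. -/
def toProd (m : MulPair mul) : (X →ₗ[ℂ] X) × (X →ₗ[ℂ] X) := (m.L, m.R)

theorem toProd_injective : Function.Injective (toProd (mul := mul)) := by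
  intro m n h
  have h1 : m.L = n.L := congrArg Prod.fst h
  have h2 : m.R = n.R := congrArg Prod.snd h
  exact MulPair.ext h1 h2

instance : AddCommGroup (MulPair mul) :=
  toProd_injective.addCommGroup toProd rfl (fun _ _ => rfl) (fun _ => rfl)
    (fun _ _ => rfl) (fun _ _ => rfl) (fun _ _ => rfl)

/-- `toProd` as an additive monoid homomorphism. -/
def toProdHom : MulPair mul →+ (X →ₗ[ℂ] X) × (X →ₗ[ℂ] X) :=
  { toFun := toProd, map_zero' := rfl, map_add' := fun _ _ => rfl }

instance : Module ℂ (MulPair mul) :=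
  Function.Injective.module ℂ (toProdHom (mul := mul)) toProd_injective fun _ _ => rfl

theorem mul_add (m n k : MulPair mul) : m * (n + k) = m * n + m * k := by
  ext x <;> simp

theorem add_mul (m n k : MulPair mul) : (m + n) * k = m * k + n * k := by
  ext x <;> simp

theorem smul_mul (c : ℂ) (m n : MulPair mul) : (c • m) * n = c • (m * n) := by
  ext x <;> simp

theorem mul_smul (c : ℂ) (m n : MulPair mul) : m * (c • n) = c • (m * n) := by
  ext x <;> simp

theorem mul_assoc (m n k : MulPair mul) : m * n * k = m * (n * k) := by
  ext x <;> simp [LinearMap.comp_assoc]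

end MulPair

end MulPair

/-! ## Slice maps -/

section Slices

variable {X Y : Type*} [AddCommGroup X] [Module ℂ X] [AddCommGroup Y] [Module ℂ Y]

/-- Apply a functional to the second tensor leg: `(ι ⊗ φ)`. -/
def sliceR (φ : X →ₗ[ℂ] ℂ) : Y ⊗[ℂ] X →ₗ[ℂ] Y :=
  (TensorProduct.rid ℂ Y).toLinearMap ∘ₗ LinearMap.lTensor Y φ

/-- Apply a functional to the first tensor leg: `(φ ⊗ ι)`. -/
def sliceL (φ : X →ₗ[ℂ] ℂ) : X ⊗[ℂ] Y →ₗ[ℂ] Y :=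
  (TensorProduct.lid ℂ Y).toLinearMap ∘ₗ LinearMap.rTensor Y φ

@[simp] theorem sliceR_tmul (φ : X →ₗ[ℂ] ℂ) (y : Y) (x : X) :
    sliceR φ (y ⊗ₜ[ℂ] x) = φ x • y := by simp [sliceR]

@[simp] theorem sliceL_tmul (φ : X →ₗ[ℂ] ℂ) (x : X) (y : Y) :
    sliceL φ (x ⊗ₜ[ℂ] y) = φ x • y := by simp [sliceL]

end Slices

/-! ## Regular multiplier Hopf algebras -/

section RegMultHopf

variable (A : Type*) [NonUnitalRing A] [Module ℂ A] [SMulCommClass ℂ A A]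
  [IsScalarTower ℂ A A]

/-- The componentwise multiplication of `A ⊗ A`, as a bilinear map. -/
def tmulMul : (A ⊗[ℂ] A) →ₗ[ℂ] (A ⊗[ℂ] A) →ₗ[ℂ] (A ⊗[ℂ] A) :=
  TensorProduct.curry
    ((TensorProduct.map (LinearMap.mul' ℂ A) (LinearMap.mul' ℂ A)) ∘ₗ
      (TensorProduct.tensorTensorTensorComm ℂ A A A A).toLinearMap)

@[simp] theorem tmulMul_tmul (x y x' y' : A) :
    tmulMul A (x ⊗ₜ[ℂ] y) (x' ⊗ₜ[ℂ] y') = (x * x') ⊗ₜ[ℂ] (y * y') := by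
  simp [tmulMul]

variable {A}

/-- A regular multiplier Hopf algebra structure on the non-unital algebra `A`
(Van Daele; see Section 2 of the paper).  The product of `A` is required to be
non-degenerate; `Δ` is the comultiplication with values in the multiplier
algebra `M(A ⊗ A)`; `T1 a b = Δ(a)(1 ⊗ b)`, `T2 a b = (a ⊗ 1)Δ(b)`,
`T3 a b = Δ(a)(b ⊗ 1)` and `T4 a b = (1 ⊗ a)Δ(b)` are the canonical maps with
values in `A ⊗ A`, and the four lifted maps on `A ⊗ A` are bijective (the last
two bijectivity conditions express regularity).  `counit` and the bijective
antipode `S` satisfy the usual axioms in covered form. -/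
structure RegMultHopf : Type _ where
  nondegL : ∀ a : A, (∀ b : A, a * b = 0) → a = 0
  nondegR : ∀ a : A, (∀ b : A, b * a = 0) → a = 0
  Δ : A → MulPair (tmulMul A)
  Δ_add : ∀ a b : A, Δ (a + b) = Δ a + Δ b
  Δ_smul : ∀ (c : ℂ) (a : A), Δ (c • a) = c • Δ a
  Δ_mul : ∀ a b : A, Δ (a * b) = Δ a * Δ b
  T1 : A →ₗ[ℂ] A →ₗ[ℂ] A ⊗[ℂ] A
  T2 : A →ₗ[ℂ] A →ₗ[ℂ] A ⊗[ℂ] A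
  T3 : A →ₗ[ℂ] A →ₗ[ℂ] A ⊗[ℂ] A
  T4 : A →ₗ[ℂ] A →ₗ[ℂ] A ⊗[ℂ] A
  T1_spec : ∀ (a b : A) (u : A ⊗[ℂ] A),
    tmulMul A (T1 a b) u = (Δ a).L (LinearMap.lTensor A (LinearMap.mulLeft ℂ b) u)
  T2_spec : ∀ (a b : A) (u : A ⊗[ℂ] A),
    tmulMul A u (T2 a b) = (Δ b).R (LinearMap.rTensor A (LinearMap.mulRight ℂ a) u)
  T3_spec : ∀ (a b : A) (u : A ⊗[ℂ] A),
    tmulMul A (T3 a b) u = (Δ a).L (LinearMap.rTensor A (LinearMap.mulLeft ℂ b) u)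
  T4_spec : ∀ (a b : A) (u : A ⊗[ℂ] A),
    tmulMul A u (T4 a b) = (Δ b).R (LinearMap.lTensor A (LinearMap.mulRight ℂ a) u)
  T1_bij : Function.Bijective (TensorProduct.lift T1)
  T2_bij : Function.Bijective (TensorProduct.lift T2)
  T3_bij : Function.Bijective (TensorProduct.lift T3)
  T4_bij : Function.Bijective (TensorProduct.lift T4)
  coassoc : ∀ a b c : A,
    (TensorProduct.assoc ℂ A A A) (LinearMap.rTensor A (T2 a) (T1 b c)) =
      LinearMap.lTensor A (T1.flip c) (T2 a b)
  counit : A →ₗ[ℂ] ℂ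
  counit_mul : ∀ a b : A, counit (a * b) = counit a * counit b
  counit_T1 : ∀ a b : A, sliceL counit (T1 a b) = a * b
  counit_T2 : ∀ a b : A, sliceR counit (T2 a b) = a * b
  S : A →ₗ[ℂ] A
  Sinv : A →ₗ[ℂ] A
  S_Sinv : ∀ a : A, S (Sinv a) = a
  Sinv_S : ∀ a : A, Sinv (S a) = a
  S_mul : ∀ a b : A, S (a * b) = S b * S a
  S_T1 : ∀ a b : A,
    LinearMap.mul' ℂ A (LinearMap.rTensor A S (T1 a b)) = counit a • b
  S_T2 : ∀ a b : A,
    LinearMap.mul' ℂ A (LinearMap.lTensor A S (T2 a b)) = counit b • a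

/-- `φ` is a left integral on `(A, Δ)`: a non-zero functional with
`(ι ⊗ φ)Δ(a) = φ(a)1` in `M(A)`; evaluated against elements of `A` this
reads `(ι ⊗ φ)(Δ(a)(b ⊗ 1)) = φ(a)b` and `(ι ⊗ φ)((b ⊗ 1)Δ(a)) = φ(a)b`. -/
def IsLeftIntegral (H : RegMultHopf (A := A)) (φ : A →ₗ[ℂ] ℂ) : Prop :=
  φ ≠ 0 ∧ (∀ a b : A, sliceR φ (H.T3 a b) = φ a • b) ∧
    ∀ a b : A, sliceR φ (H.T2 b a) = φ a • b

end RegMultHopf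

/-! ## Module algebras and smash products -/

section ModAlg

variable {A : Type*} [NonUnitalRing A] [Module ℂ A] [SMulCommClass ℂ A A]
  [IsScalarTower ℂ A A]
variable {R : Type*} [AddCommGroup R] [Module ℂ R]

/-- The bilinear map `(p, q) ↦ (p ▷ x) ⬝ (q ▷ z)` used to express the module
algebra condition `a ▷ (x ⬝ y) = Σ (a₍₁₎ ▷ x) ⬝ (a₍₂₎ ▷ y)` in covered form. -/
def actPair (mulR : R →ₗ[ℂ] R →ₗ[ℂ] R) (act : A →ₗ[ℂ] R →ₗ[ℂ] R) (x z : R) :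
    A →ₗ[ℂ] A →ₗ[ℂ] R :=
  LinearMap.mk₂ ℂ (fun p q => mulR (act p x) (act q z))
    (fun p p' q => by simp)
    (fun c p q => by simp)
    (fun p q q' => by simp)
    (fun c p q => by simp)

/-- `R`, an algebra with multiplication `mulR` (associative, with
non-degenerate product), is a left `A`-module algebra for the unital action
`act`; the compatibility `a(xy) = Σ (a₍₁₎x)(a₍₂₎y)` is expressed in the
covered form `a ▷ (x ⬝ (b ▷ z)) = Σ (a₍₁₎ ▷ x) ⬝ ((a₍₂₎ b) ▷ z)` using
`T1 a b = Δ(a)(1 ⊗ b)`. -/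
structure IsModAlg (H : RegMultHopf (A := A)) (mulR : R →ₗ[ℂ] R →ₗ[ℂ] R)
    (act : A →ₗ[ℂ] R →ₗ[ℂ] R) : Prop where
  mul_assoc' : ∀ x y z : R, mulR (mulR x y) z = mulR x (mulR y z)
  mul_nondegL : ∀ x : R, (∀ y : R, mulR x y = 0) → x = 0
  mul_nondegR : ∀ x : R, (∀ y : R, mulR y x = 0) → x = 0
  act_act : ∀ (a b : A) (x : R), act (a * b) x = act a (act b x)
  unital : Submodule.span ℂ {y : R | ∃ a x, act a x = y} = ⊤
  compat : ∀ (a b : A) (x z : R),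
    act a (mulR x (act b z)) =
      TensorProduct.lift (actPair mulR act x z) (H.T1 a b)

/-- The bilinear map `(p, q) ↦ (x ⬝ (p ▷ x')) ⊗ q` describing the smash
product multiplication in covered form. -/
def smashPair (mulR : R →ₗ[ℂ] R →ₗ[ℂ] R) (act : A →ₗ[ℂ] R →ₗ[ℂ] R) (x x' : R) :
    A →ₗ[ℂ] A →ₗ[ℂ] R ⊗[ℂ] A :=
  LinearMap.mk₂ ℂ (fun p q => mulR x (act p x') ⊗ₜ[ℂ] q)
    (fun p p' q => by simp [add_tmul])
    (fun c p q => by simp [smul_tmul'])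
    (fun p q q' => by simp [tmul_add])
    (fun c p q => by simp [tmul_smul])

/-- The bilinear map `(p, q) ↦ p ▷ (f (q ▷ z))`, used to express in covered
form the extension of an action to the multiplier algebra `M(R)`:
`(a ▷ m)x = Σ a₍₁₎ ▷ (m (S(a₍₂₎) ▷ x))`. -/
def actSandwich (act : A →ₗ[ℂ] R →ₗ[ℂ] R) (f : R →ₗ[ℂ] R) (z : R) :
    A →ₗ[ℂ] A →ₗ[ℂ] R :=
  LinearMap.mk₂ ℂ (fun p q => act p (f (act q z)))
    (fun p p' q => by simp)
    (fun c p q => by simp)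
    (fun p q q' => by simp)
    (fun c p q => by simp)

/-- The bilinear map `(p, q) ↦ (x ⬝ γ(p)) ⊗ q` for a map `γ` into the
multiplier algebra `M(R)`. -/
def multTensorPair {mulR : R →ₗ[ℂ] R →ₗ[ℂ] R} (γ : A →ₗ[ℂ] MulPair mulR) (x : R) :
    A →ₗ[ℂ] A →ₗ[ℂ] R ⊗[ℂ] A :=
  LinearMap.mk₂ ℂ (fun p q => ((γ p).R x) ⊗ₜ[ℂ] q)
    (fun p p' q => by simp [add_tmul])
    (fun c p q => by simp [smul_tmul'])
    (fun p q q' => by simp [tmul_add])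
    (fun c p q => by simp [tmul_smul])

/-- `μ` is the multiplication of the smash product `R # A`:
`(x # a)(x' # a') = Σ x(a₍₁₎ ▷ x') # a₍₂₎a'`, expressed via
`T1 a a' = Δ(a)(1 ⊗ a') = Σ a₍₁₎ ⊗ a₍₂₎a'`. -/
def IsSmashMul (H : RegMultHopf (A := A)) (mulR : R →ₗ[ℂ] R →ₗ[ℂ] R)
    (act : A →ₗ[ℂ] R →ₗ[ℂ] R)
    (μ : (R ⊗[ℂ] A) →ₗ[ℂ] (R ⊗[ℂ] A) →ₗ[ℂ] (R ⊗[ℂ] A)) : Prop :=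
  ∀ (x x' : R) (a a' : A),
    μ (x ⊗ₜ[ℂ] a) (x' ⊗ₜ[ℂ] a') =
      TensorProduct.lift (smashPair mulR act x x') (H.T1 a a')

end ModAlg

/-! ## Dual pairs of regular multiplier Hopf algebras -/

section Pairing

variable {A B : Type*} [NonUnitalRing A] [Module ℂ A] [SMulCommClass ℂ A A]
  [IsScalarTower ℂ A A] [NonUnitalRing B] [Module ℂ B] [SMulCommClass ℂ B B]
  [IsScalarTower ℂ B B]

/-- A (non-degenerate) pairing of regular multiplier Hopf algebras in the
sense of Drabant–Van Daele.  `β` is the bilinear form; `lA a b = a ▷ b =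
Σ ⟨a, b₍₂₎⟩ b₍₁₎`, `lB b a = b ▷ a = Σ ⟨a₍₂₎, b⟩ a₍₁₎`, `rA a b = a ◁ b =
Σ ⟨a₍₁₎, b⟩ a₍₂₎`, `rB b a = b ◁ a = Σ ⟨a, b₍₁₎⟩ b₍₂₎` are the Sweedler leg
actions, tied to the comultiplications via the `..._leg` axioms and dual to
the multiplications via the `dual...` axioms; all four actions are unital
module actions. -/
structure MHAPairing (HA : RegMultHopf (A := A)) (HB : RegMultHopf (A := B)) :
    Type _ where
  β : A →ₗ[ℂ] B →ₗ[ℂ] ℂ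
  nondegA : ∀ a : A, (∀ b : B, β a b = 0) → a = 0
  nondegB : ∀ b : B, (∀ a : A, β a b = 0) → b = 0
  lA : A →ₗ[ℂ] B →ₗ[ℂ] B
  lB : B →ₗ[ℂ] A →ₗ[ℂ] A
  rA : A →ₗ[ℂ] B →ₗ[ℂ] A
  rB : B →ₗ[ℂ] A →ₗ[ℂ] B
  lA_leg : ∀ (a : A) (b c : B), sliceR (β a) (HB.T3 b c) = lA a b * c
  rB_leg : ∀ (a : A) (b c : B), sliceL (β a) (HB.T4 c b) = c * rB b a
  lB_leg : ∀ (b : B) (a c : A), sliceR (β.flip b) (HA.T3 a c) = lB b a * c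
  rA_leg : ∀ (b : B) (a c : A), sliceL (β.flip b) (HA.T4 c a) = c * rA a b
  dual1 : ∀ (a : A) (b b' : B), β a (b * b') = β (rA a b) b'
  dual2 : ∀ (a : A) (b b' : B), β a (b' * b) = β (lB b a) b'
  dual3 : ∀ (a a' : A) (b : B), β (a * a') b = β a' (rB b a)
  dual4 : ∀ (a a' : A) (b : B), β (a' * a) b = β a' (lA a b)
  lA_act : ∀ (a a' : A) (b : B), lA (a * a') b = lA a (lA a' b)
  lB_act : ∀ (b b' : B) (a : A), lB (b * b') a = lB b (lB b' a)
  rA_act : ∀ (a : A) (b b' : B), rA a (b * b') = rA (rA a b) b'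
  rB_act : ∀ (b : B) (a a' : A), rB b (a * a') = rB (rB b a) a'
  lA_unital : Submodule.span ℂ {y : B | ∃ a b, lA a b = y} = ⊤
  lB_unital : Submodule.span ℂ {y : A | ∃ b a, lB b a = y} = ⊤
  rA_unital : Submodule.span ℂ {y : A | ∃ a b, rA a b = y} = ⊤
  rB_unital : Submodule.span ℂ {y : B | ∃ b a, rB b a = y} = ⊤

end Pairing

/-! ## The dual action -/

section DualAction

variable {A B : Type*} [NonUnitalRing A] [Module ℂ A] [SMulCommClass ℂ A A]
  [IsScalarTower ℂ A A] [NonUnitalRing B] [Module ℂ B] [SMulCommClass ℂ B B]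
  [IsScalarTower ℂ B B]
variable {R : Type*} [AddCommGroup R] [Module ℂ R]
variable {HA : RegMultHopf (A := A)} {HB : RegMultHopf (A := B)}

/-- The dual action of `B` on the smash product `R # A`:
`b · (x # a) = x # (b ▷ a) = Σ ⟨a₍₂₎, b⟩ x # a₍₁₎`. -/
def dualAct (P : MHAPairing HA HB) : B →ₗ[ℂ] (R ⊗[ℂ] A) →ₗ[ℂ] R ⊗[ℂ] A :=
  (LinearMap.lTensorHom R) ∘ₗ P.lB

@[simp] theorem dualAct_tmul (P : MHAPairing HA HB) (b : B) (x : R) (a : A) :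
    dualAct P b (x ⊗ₜ[ℂ] a) = x ⊗ₜ[ℂ] P.lB b a := rfl

end DualAction

end

/-! ## Auxiliary machinery -/

noncomputable section Prop67Aux

open LinearMap TensorProduct

namespace Prop67

section GenericSlices

variable {X Y Z W V : Type*} [AddCommGroup X] [Module ℂ X] [AddCommGroup Y] [Module ℂ Y]
  [AddCommGroup Z] [Module ℂ Z] [AddCommGroup W] [Module ℂ W] [AddCommGroup V] [Module ℂ V]

lemma sliceR_lTensor (f : X →ₗ[ℂ] ℂ) (g : Z →ₗ[ℂ] X) (s : Y ⊗[ℂ] Z) :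
    sliceR f (lTensor Y g s) = sliceR (f ∘ₗ g) s := by
  induction s using TensorProduct.induction_on with
  | zero => simp
  | tmul y z => simp
  | add u v hu hv => simp [hu, hv]

lemma sliceR_rTensor (f : X →ₗ[ℂ] ℂ) (g : Y →ₗ[ℂ] Z) (s : Y ⊗[ℂ] X) :
    sliceR f (rTensor X g s) = g (sliceR f s) := by
  induction s using TensorProduct.induction_on with
  | zero => simp
  | tmul y z => simp
  | add u v hu hv => simp [hu, hv]

lemma sliceL_rTensor (f : X →ₗ[ℂ] ℂ) (g : Z →ₗ[ℂ] X) (s : Z ⊗[ℂ] Y) :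
    sliceL f (rTensor Y g s) = sliceL (f ∘ₗ g) s := by
  induction s using TensorProduct.induction_on with
  | zero => simp
  | tmul y z => simp
  | add u v hu hv => simp [hu, hv]

lemma sliceL_lTensor (f : X →ₗ[ℂ] ℂ) (g : Y →ₗ[ℂ] Z) (s : X ⊗[ℂ] Y) :
    sliceL f (lTensor X g s) = g (sliceL f s) := by
  induction s using TensorProduct.induction_on with
  | zero => simp
  | tmul y z => simp
  | add u v hu hv => simp [hu, hv]

lemma sliceR_map (h : X →ₗ[ℂ] ℂ) (f : Y →ₗ[ℂ] Z) (g : W →ₗ[ℂ] X) (t : Y ⊗[ℂ] W) :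
    sliceR h (TensorProduct.map f g t) = f (sliceR (h ∘ₗ g) t) := by
  induction t using TensorProduct.induction_on with
  | zero => simp
  | tmul y z => simp
  | add u v hu hv => simp [hu, hv]

/-- Decomposition of a tensor along a basis of the left factor. -/
lemma exists_finset_decomp {ι : Type*} (b : Module.Basis ι ℂ Y) (s : Y ⊗[ℂ] Z) :
    ∃ fs : Finset ι, s = ∑ i ∈ fs, (b i) ⊗ₜ[ℂ] sliceL (b.coord i) s := by
  classical
  induction s using TensorProduct.induction_on with
  | zero => exact ⟨∅, by simp⟩
  | tmul y z =>
      refine ⟨(b.repr y).support, ?_⟩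
      have h1 : ∑ i ∈ (b.repr y).support, (b i) ⊗ₜ[ℂ] sliceL (b.coord i) (y ⊗ₜ[ℂ] z)
          = (∑ i ∈ (b.repr y).support, b.repr y i • b i) ⊗ₜ[ℂ] z := by
        rw [TensorProduct.sum_tmul]
        refine Finset.sum_congr rfl fun i _ => ?_
        simp [TensorProduct.smul_tmul]
      have h2 : (∑ i ∈ (b.repr y).support, b.repr y i • b i) = y := by
        conv_rhs => rw [← b.linearCombination_repr y]
        rw [Finsupp.linearCombination_apply, Finsupp.sum]
      rw [h1, h2]
  | add u v hu hv =>
      obtain ⟨fu, hu⟩ := hu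
      obtain ⟨fv, hv⟩ := hv
      have ext_sum : ∀ (u : Y ⊗[ℂ] Z) (fu fs : Finset ι), fu ⊆ fs →
          u = ∑ i ∈ fu, (b i) ⊗ₜ[ℂ] sliceL (b.coord i) u →
          u = ∑ i ∈ fs, (b i) ⊗ₜ[ℂ] sliceL (b.coord i) u := by
        intro u fu fs hsub hu
        refine hu.trans (Finset.sum_subset hsub ?_)
        intro i _ hi
        have hz : sliceL (b.coord i) u = 0 := by
          calc sliceL (b.coord i) u
              = sliceL (b.coord i) (∑ j ∈ fu, (b j) ⊗ₜ[ℂ] sliceL (b.coord j) u) := by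
                rw [← hu]
            _ = 0 := by
                rw [map_sum]
                refine Finset.sum_eq_zero fun j hj => ?_
                have hij : j ≠ i := fun h => hi (h ▸ hj)
                simp [Module.Basis.coord_apply, Finsupp.single_apply, hij]
        rw [hz, TensorProduct.tmul_zero]
      refine ⟨fu ∪ fv, ?_⟩
      have hu' := ext_sum u fu (fu ∪ fv) Finset.subset_union_left hu
      have hv' := ext_sum v fv (fu ∪ fv) Finset.subset_union_right hv
      calc u + v = ∑ i ∈ fu ∪ fv, ((b i) ⊗ₜ[ℂ] sliceL (b.coord i) u
            + (b i) ⊗ₜ[ℂ] sliceL (b.coord i) v) := by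
            rw [Finset.sum_add_distrib, ← hu', ← hv']
        _ = ∑ i ∈ fu ∪ fv, (b i) ⊗ₜ[ℂ] sliceL (b.coord i) (u + v) := by
            refine Finset.sum_congr rfl fun i _ => ?_
            rw [map_add, TensorProduct.tmul_add]

/-- Joint non-degeneracy: a tensor killed by a jointly injective family of maps
on the second leg is zero. -/
lemma lTensor_family_eq_zero {W' : Type*} (G : W' → (Z →ₗ[ℂ] V))
    (hG : ∀ z : Z, (∀ w, G w z = 0) → z = 0)
    (s : Y ⊗[ℂ] Z) (hs : ∀ w, lTensor Y (G w) s = 0) : s = 0 := by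
  classical
  set b := Module.Basis.ofVectorSpace ℂ Y
  obtain ⟨fs, hfs⟩ := exists_finset_decomp b s
  have hz : ∀ i, sliceL (b.coord i) s = 0 := by
    intro i
    refine hG _ fun w => ?_
    have := congrArg (sliceL (b.coord i)) (hs w)
    rwa [sliceL_lTensor, map_zero] at this
  rw [hfs]
  exact Finset.sum_eq_zero fun i _ => by rw [hz i, TensorProduct.tmul_zero]

lemma comm_rTensor (g : Z →ₗ[ℂ] V) (s : Z ⊗[ℂ] Y) :
    (TensorProduct.comm ℂ V Y).symm (lTensor Y g (TensorProduct.comm ℂ Z Y s))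
      = rTensor Y g s := by
  induction s using TensorProduct.induction_on with
  | zero => simp
  | tmul y z => simp
  | add u v hu hv => simp only [map_add, hu, hv]

lemma rTensor_family_eq_zero {W' : Type*} (G : W' → (Z →ₗ[ℂ] V))
    (hG : ∀ z : Z, (∀ w, G w z = 0) → z = 0)
    (s : Z ⊗[ℂ] Y) (hs : ∀ w, rTensor Y (G w) s = 0) : s = 0 := by
  have h2 : ∀ w, lTensor Y (G w) (TensorProduct.comm ℂ Z Y s) = 0 := by
    intro w
    have := congrArg (TensorProduct.comm ℂ V Y).symm.symm (comm_rTensor (G w) s)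
    rw [LinearEquiv.symm_symm, LinearEquiv.apply_symm_apply] at this
    rw [this, hs w, map_zero]
  have := lTensor_family_eq_zero G hG _ h2
  have := congrArg (TensorProduct.comm ℂ Z Y).symm this
  simpa using this

lemma sliceR_family_eq_zero {W' : Type*} (G : W' → (Z →ₗ[ℂ] ℂ))
    (hG : ∀ z : Z, (∀ w, G w z = 0) → z = 0)
    (s : Y ⊗[ℂ] Z) (hs : ∀ w, sliceR (G w) s = 0) : s = 0 := by
  refine lTensor_family_eq_zero G hG s fun w => ?_
  have : sliceR (G w) s = (TensorProduct.rid ℂ Y) (lTensor Y (G w) s) := rfl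
  rw [hs w] at this
  exact (LinearEquiv.map_eq_zero_iff _).mp this.symm

/-- Generic lift helpers. -/
lemma map_lift (F : Z →ₗ[ℂ] V) (Θ : X →ₗ[ℂ] Y →ₗ[ℂ] Z) (s : X ⊗[ℂ] Y) :
    F (TensorProduct.lift Θ s) = TensorProduct.lift (Θ.compr₂ F) s := by
  induction s using TensorProduct.induction_on with
  | zero => simp
  | tmul y z => simp
  | add u v hu hv => simp [hu, hv]

lemma lift_congr {Θ Θ' : X →ₗ[ℂ] Y →ₗ[ℂ] Z} (h : ∀ x y, Θ x y = Θ' x y)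
    (s : X ⊗[ℂ] Y) : TensorProduct.lift Θ s = TensorProduct.lift Θ' s := by
  induction s using TensorProduct.induction_on with
  | zero => simp
  | tmul y z => simp [h]
  | add u v hu hv => simp [hu, hv]

lemma lift_lTensor (Θ : X →ₗ[ℂ] Y →ₗ[ℂ] Z) (g : W →ₗ[ℂ] Y) (s : X ⊗[ℂ] W) :
    TensorProduct.lift Θ (lTensor X g s) = TensorProduct.lift (Θ.compl₂ g) s := by
  induction s using TensorProduct.induction_on with
  | zero => simp
  | tmul y z => simp
  | add u v hu hv => simp [hu, hv]

lemma lift_rTensor (Θ : X →ₗ[ℂ] Y →ₗ[ℂ] Z) (g : W →ₗ[ℂ] X) (s : W ⊗[ℂ] Y) :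
    TensorProduct.lift Θ (rTensor Y g s) = TensorProduct.lift (Θ ∘ₗ g) s := by
  induction s using TensorProduct.induction_on with
  | zero => simp
  | tmul y z => simp
  | add u v hu hv => simp [hu, hv]

end GenericSlices

section MulLemmas

variable (A : Type*) [NonUnitalRing A] [Module ℂ A] [SMulCommClass ℂ A A]
  [IsScalarTower ℂ A A]

local notation "m" => tmulMul A
local notation "ml" => LinearMap.mulLeft ℂ
local notation "mr" => LinearMap.mulRight ℂ

lemma c1 (z : A) (s u : A ⊗[ℂ] A) :
    m (rTensor A (mr z) s) u = m s (rTensor A (ml z) u) := by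
  induction s using TensorProduct.induction_on with
  | zero => simp
  | tmul p q =>
      induction u using TensorProduct.induction_on with
      | zero => simp
      | tmul x y => simp [mul_assoc]
      | add u₁ u₂ h1 h2 => simp only [map_add, h1, h2]
  | add s₁ s₂ h1 h2 => simp only [map_add, LinearMap.add_apply, h1, h2]

lemma c2 (z : A) (s u : A ⊗[ℂ] A) :
    m (lTensor A (mr z) s) u = m s (lTensor A (ml z) u) := by
  induction s using TensorProduct.induction_on with
  | zero => simp
  | tmul p q =>
      induction u using TensorProduct.induction_on with
      | zero => simp
      | tmul x y => simp [mul_assoc]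
      | add u₁ u₂ h1 h2 => simp only [map_add, h1, h2]
  | add s₁ s₂ h1 h2 => simp only [map_add, LinearMap.add_apply, h1, h2]

lemma c6 (z : A) (s u : A ⊗[ℂ] A) :
    m s (rTensor A (mr z) u) = rTensor A (mr z) (m s u) := by
  induction s using TensorProduct.induction_on with
  | zero => simp
  | tmul p q =>
      induction u using TensorProduct.induction_on with
      | zero => simp
      | tmul x y => simp [mul_assoc]
      | add u₁ u₂ h1 h2 => simp only [map_add, h1, h2]
  | add s₁ s₂ h1 h2 => simp only [map_add, LinearMap.add_apply, h1, h2]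

lemma c13 (z : A) (s u : A ⊗[ℂ] A) :
    m s (lTensor A (mr z) u) = lTensor A (mr z) (m s u) := by
  induction s using TensorProduct.induction_on with
  | zero => simp
  | tmul p q =>
      induction u using TensorProduct.induction_on with
      | zero => simp
      | tmul x y => simp [mul_assoc]
      | add u₁ u₂ h1 h2 => simp only [map_add, h1, h2]
  | add s₁ s₂ h1 h2 => simp only [map_add, LinearMap.add_apply, h1, h2]

lemma c11 (z : A) (w s : A ⊗[ℂ] A) :
    m w (rTensor A (ml z) s) = m (rTensor A (mr z) w) s := by
  induction s using TensorProduct.induction_on with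
  | zero => simp
  | tmul p q =>
      induction w using TensorProduct.induction_on with
      | zero => simp
      | tmul x y => simp [mul_assoc]
      | add u₁ u₂ h1 h2 => simp only [map_add, LinearMap.add_apply, h1, h2]
  | add s₁ s₂ h1 h2 => simp only [map_add, h1, h2]

lemma c12 (z : A) (w s : A ⊗[ℂ] A) :
    m w (lTensor A (ml z) s) = m (lTensor A (mr z) w) s := by
  induction s using TensorProduct.induction_on with
  | zero => simp
  | tmul p q =>
      induction w using TensorProduct.induction_on with
      | zero => simp
      | tmul x y => simp [mul_assoc]
      | add u₁ u₂ h1 h2 => simp only [map_add, LinearMap.add_apply, h1, h2]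
  | add s₁ s₂ h1 h2 => simp only [map_add, h1, h2]

lemma c8 (s t u : A ⊗[ℂ] A) : m (m s t) u = m s (m t u) := by
  induction s using TensorProduct.induction_on with
  | zero => simp
  | tmul p q =>
      induction t using TensorProduct.induction_on with
      | zero => simp
      | tmul x y =>
          induction u using TensorProduct.induction_on with
          | zero => simp
          | tmul e f => simp [mul_assoc]
          | add u₁ u₂ h1 h2 => simp only [map_add, h1, h2]
      | add t₁ t₂ h1 h2 => simp only [map_add, LinearMap.add_apply, h1, h2]
  | add s₁ s₂ h1 h2 => simp only [map_add, LinearMap.add_apply, h1, h2]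

lemma c9 (e f : A) (u : A ⊗[ℂ] A) :
    m (e ⊗ₜ[ℂ] f) u = rTensor A (ml e) (lTensor A (ml f) u) := by
  induction u using TensorProduct.induction_on with
  | zero => simp
  | tmul x y => simp
  | add u₁ u₂ h1 h2 => simp only [map_add, h1, h2]

lemma c10 (e f : A) (u : A ⊗[ℂ] A) :
    m u (e ⊗ₜ[ℂ] f) = rTensor A (mr e) (lTensor A (mr f) u) := by
  induction u using TensorProduct.induction_on with
  | zero => simp
  | tmul x y => simp
  | add u₁ u₂ h1 h2 => simp only [map_add, LinearMap.add_apply, h1, h2]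

lemma ltrt {g f : A →ₗ[ℂ] A} (x : A ⊗[ℂ] A) :
    lTensor A f (rTensor A g x) = rTensor A g (lTensor A f x) := by
  induction x using TensorProduct.induction_on with
  | zero => simp
  | tmul x y => simp
  | add u₁ u₂ h1 h2 => simp only [map_add, h1, h2]

lemma m1 (s : A ⊗[ℂ] A) (w : A) :
    mul' ℂ A s * w = mul' ℂ A (lTensor A (mr w) s) := by
  induction s using TensorProduct.induction_on with
  | zero => simp
  | tmul x y => simp [mul_assoc]
  | add u₁ u₂ h1 h2 => simp only [map_add, add_mul, h1, h2]

lemma m2 (z : A) (s : A ⊗[ℂ] A) :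
    mul' ℂ A (rTensor A (ml z) s) = z * mul' ℂ A s := by
  induction s using TensorProduct.induction_on with
  | zero => simp
  | tmul x y => simp [mul_assoc]
  | add u₁ u₂ h1 h2 => simp only [map_add, mul_add, h1, h2]

end MulLemmas

section HopfLemmas

variable {A : Type*} [NonUnitalRing A] [Module ℂ A] [SMulCommClass ℂ A A]
  [IsScalarTower ℂ A A]

local notation "m" => tmulMul A
local notation "ml" => LinearMap.mulLeft ℂ
local notation "mr" => LinearMap.mulRight ℂ

/-- Non-degeneracy of the product of `A ⊗ A` (right version). -/
lemma N1 (H : RegMultHopf (A := A)) {t : A ⊗[ℂ] A} (h : ∀ u, m t u = 0) : t = 0 := by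
  have h2 : ∀ v, lTensor A (mr v) t = 0 := by
    intro v
    refine rTensor_family_eq_zero (fun u : A => mr u)
      (fun z hz => H.nondegL z (by simpa using hz)) _ fun u => ?_
    have := h (u ⊗ₜ[ℂ] v)
    rwa [c10] at this
  exact lTensor_family_eq_zero (fun v : A => mr v)
    (fun z hz => H.nondegL z (by simpa using hz)) t h2

/-- Non-degeneracy of the product of `A ⊗ A` (left version). -/
lemma N2 (H : RegMultHopf (A := A)) {t : A ⊗[ℂ] A} (h : ∀ u, m u t = 0) : t = 0 := by
  have h2 : ∀ v, lTensor A (ml v) t = 0 := by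
    intro v
    refine rTensor_family_eq_zero (fun u : A => ml u)
      (fun z hz => H.nondegR z (by simpa using hz)) _ fun u => ?_
    have := h (u ⊗ₜ[ℂ] v)
    rwa [c9] at this
  exact lTensor_family_eq_zero (fun v : A => ml v)
    (fun z hz => H.nondegR z (by simpa using hz)) t h2

lemma N1' (H : RegMultHopf (A := A)) {t t' : A ⊗[ℂ] A} (h : ∀ u, m t u = m t' u) : t = t' := by
  have : t - t' = 0 := N1 H fun u => by
    rw [map_sub, LinearMap.sub_apply, h, sub_self]
  exact sub_eq_zero.mp this

lemma N2' (H : RegMultHopf (A := A)) {t t' : A ⊗[ℂ] A} (h : ∀ u, m u t = m u t') : t = t' := by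
  have : t - t' = 0 := N2 H fun u => by
    rw [map_sub, h, sub_self]
  exact sub_eq_zero.mp this

lemma nd1 (H : RegMultHopf (A := A)) {a a' : A} (h : ∀ w, a * w = a' * w) : a = a' :=
  sub_eq_zero.mp (H.nondegL _ fun w => by rw [sub_mul, h, sub_self])

lemma ndLt (H : RegMultHopf (A := A)) {t t' : A ⊗[ℂ] A}
    (h : ∀ z, lTensor A (mr z) t = lTensor A (mr z) t') : t = t' := by
  have : t - t' = 0 := by
    refine lTensor_family_eq_zero (fun z : A => mr z)
      (fun y hy => H.nondegL y (by simpa using hy)) _ fun z => ?_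
    rw [map_sub, h, sub_self]
  exact sub_eq_zero.mp this

lemma ndFirst (H : RegMultHopf (A := A)) {X X' : A ⊗[ℂ] (A ⊗[ℂ] A)}
    (h : ∀ a, rTensor (A ⊗[ℂ] A) (ml a) X = rTensor (A ⊗[ℂ] A) (ml a) X') : X = X' := by
  have : X - X' = 0 := by
    refine rTensor_family_eq_zero (fun a : A => ml a)
      (fun y hy => H.nondegR y (by simpa using hy)) _ fun a => ?_
    rw [map_sub, h, sub_self]
  exact sub_eq_zero.mp this

variable (H : RegMultHopf (A := A))

lemma mulT1right (a b : A) (u : A ⊗[ℂ] A) :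
    m u (H.T1 a b) = lTensor A (mr b) ((H.Δ a).R u) :=
  N1' H fun w => by rw [c8, H.T1_spec, (H.Δ a).middle, ← c2]

lemma mulT3right (a b : A) (u : A ⊗[ℂ] A) :
    m u (H.T3 a b) = rTensor A (mr b) ((H.Δ a).R u) :=
  N1' H fun w => by rw [c8, H.T3_spec, (H.Δ a).middle, ← c1]

lemma EL1 (c p q : A) : lTensor A (mr q) (H.T3 c p) = (H.Δ c).L (p ⊗ₜ[ℂ] q) :=
  N1' H fun w => by rw [c2, H.T3_spec, ← c9, ← (H.Δ c).L_mul]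

lemma EL2 (c p q : A) : rTensor A (mr p) (H.T1 c q) = (H.Δ c).L (p ⊗ₜ[ℂ] q) :=
  N1' H fun w => by rw [c1, H.T1_spec, ltrt, ← c9, ← (H.Δ c).L_mul]

lemma EL3 (c a z : A) : rTensor A (ml z) (H.T4 c a) = (H.Δ a).R (z ⊗ₜ[ℂ] c) :=
  N2' H fun w => by rw [c11, H.T4_spec, ltrt, ← c10, ← (H.Δ a).R_mul]

lemma EL6 (x v c₀ : A) : H.T3 (x * v) c₀ = (H.Δ x).L (H.T3 v c₀) :=
  N1' H fun w => by
    rw [H.T3_spec, H.Δ_mul, MulPair.mul_L, LinearMap.comp_apply, ← H.T3_spec,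
      ← (H.Δ x).L_mul]

lemma EL8 (p q a₀ : A) : H.T2 p (q * a₀) = (H.Δ a₀).R (H.T2 p q) :=
  N2' H fun w => by
    rw [H.T2_spec, H.Δ_mul, MulPair.mul_R, LinearMap.comp_apply, ← H.T2_spec,
      ← (H.Δ a₀).R_mul]

lemma EL9 (a b y : A) :
    rTensor A (ml a) (H.T3 b y) = rTensor A (mr y) (H.T2 a b) :=
  N2' H fun w => by rw [c11, mulT3right H, c6, H.T2_spec]

lemma EL10 (x q z : A) :
    rTensor A (ml x) (H.T1 q z) = lTensor A (mr z) (H.T2 x q) :=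
  N2' H fun w => by rw [c11, mulT1right H, c13, H.T2_spec]

lemma E1 (c a c₀ : A) :
    lTensor A (ml c) (H.T3 a c₀) = rTensor A (mr c₀) (H.T4 c a) :=
  N2' H fun w => by rw [c12, mulT3right H, c6, H.T4_spec]

lemma E5 (c b b' : A) :
    lTensor A (ml c) (H.T1 b b') = lTensor A (mr b') (H.T4 c b) :=
  N2' H fun w => by rw [c12, mulT1right H, c13, H.T4_spec]

lemma rt_rt {M N P Y : Type*} [AddCommGroup M] [Module ℂ M] [AddCommGroup N] [Module ℂ N]
    [AddCommGroup P] [Module ℂ P] [AddCommGroup Y] [Module ℂ Y]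
    (f : M →ₗ[ℂ] N) (g : N →ₗ[ℂ] P) (x : M ⊗[ℂ] Y) :
    rTensor Y g (rTensor Y f x) = rTensor Y (g ∘ₗ f) x := by
  induction x using TensorProduct.induction_on with
  | zero => simp
  | tmul x y => simp
  | add u v hu hv => simp [hu, hv]

lemma Scomp (e : A) : H.S ∘ₗ mr e = (ml (H.S e)) ∘ₗ H.S :=
  LinearMap.ext fun x => by simp [H.S_mul]

lemma SA3 (p e : A) :
    mul' ℂ A (rTensor A H.S (H.T3 p e)) = H.counit p • H.S e := by
  refine nd1 H fun w => ?_
  rw [m1, ltrt, EL1 H, ← EL2 H, rt_rt, Scomp H, ← rt_rt, m2, H.S_T1]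
  rw [mul_smul_comm, smul_mul_assoc]

lemma A3 (f : A →ₗ[ℂ] A) (X : (A ⊗[ℂ] A) ⊗[ℂ] A) :
    (TensorProduct.assoc ℂ A A A) (rTensor A (rTensor A f) X)
      = rTensor (A ⊗[ℂ] A) f ((TensorProduct.assoc ℂ A A A) X) := by
  induction X using TensorProduct.induction_on with
  | zero => simp
  | tmul t z =>
      induction t using TensorProduct.induction_on with
      | zero => simp
      | tmul x y => simp
      | add u v hu hv =>
          simp only [rTensor_tmul] at hu hv
          simp [add_tmul, hu, hv]
  | add u v hu hv => simp [hu, hv]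

lemma A5 (g : A →ₗ[ℂ] A) (F : A →ₗ[ℂ] A ⊗[ℂ] A) (t : A ⊗[ℂ] A) :
    rTensor (A ⊗[ℂ] A) g (lTensor A F t) = lTensor A F (rTensor A g t) := by
  induction t using TensorProduct.induction_on with
  | zero => simp
  | tmul x y => simp
  | add u v hu hv => simp [hu, hv]

lemma CA2 (c e z : A) :
    (TensorProduct.assoc ℂ A A A) (rTensor A (H.T3.flip e) (H.T1 c z))
      = lTensor A (H.T1.flip z) (H.T3 c e) := by
  refine ndFirst H fun a => ?_
  have hcomp1 : (rTensor A (ml a)) ∘ₗ (H.T3.flip e) = (rTensor A (mr e)) ∘ₗ (H.T2 a) :=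
    LinearMap.ext fun p => by simp only [LinearMap.comp_apply, LinearMap.flip_apply]; exact EL9 H a p e
  have hcomp2 : (rTensor A (ml a)) ∘ₗ (H.T3.flip e) ∘ₗ (0 : A →ₗ[ℂ] A) = 0 := by simp
  calc rTensor (A ⊗[ℂ] A) (ml a) ((TensorProduct.assoc ℂ A A A) (rTensor A (H.T3.flip e) (H.T1 c z)))
      = (TensorProduct.assoc ℂ A A A) (rTensor A (rTensor A (ml a)) (rTensor A (H.T3.flip e) (H.T1 c z))) := by
        rw [A3]
    _ = (TensorProduct.assoc ℂ A A A) (rTensor A ((rTensor A (ml a)) ∘ₗ (H.T3.flip e)) (H.T1 c z)) := by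
        rw [rt_rt]
    _ = (TensorProduct.assoc ℂ A A A) (rTensor A ((rTensor A (mr e)) ∘ₗ (H.T2 a)) (H.T1 c z)) := by
        rw [hcomp1]
    _ = rTensor (A ⊗[ℂ] A) (mr e) ((TensorProduct.assoc ℂ A A A) (rTensor A (H.T2 a) (H.T1 c z))) := by
        rw [← rt_rt, A3]
    _ = rTensor (A ⊗[ℂ] A) (mr e) (lTensor A (H.T1.flip z) (H.T2 a c)) := by
        rw [H.coassoc a c z]
    _ = lTensor A (H.T1.flip z) (rTensor A (mr e) (H.T2 a c)) := by rw [A5]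
    _ = lTensor A (H.T1.flip z) (rTensor A (ml a) (H.T3 c e)) := by rw [← EL9 H]
    _ = rTensor (A ⊗[ℂ] A) (ml a) (lTensor A (H.T1.flip z) (H.T3 c e)) := by rw [A5]

lemma smulRight_rTensor {X Y : Type*} [AddCommGroup X] [Module ℂ X] [AddCommGroup Y]
    [Module ℂ Y] (f : X →ₗ[ℂ] ℂ) (x₀ : Y) (t : X ⊗[ℂ] A) :
    rTensor A (f.smulRight x₀) t = x₀ ⊗ₜ[ℂ] sliceL f t := by
  induction t using TensorProduct.induction_on with
  | zero => simp
  | tmul x y => simp [TensorProduct.smul_tmul']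
  | add u v hu hv => simp [hu, hv, TensorProduct.tmul_add]

lemma kappa_tmul (p : A) (t : A ⊗[ℂ] A) :
    rTensor A ((mul' ℂ A) ∘ₗ rTensor A H.S) ((TensorProduct.assoc ℂ A A A).symm (p ⊗ₜ[ℂ] t))
      = rTensor A (ml (H.S p)) t := by
  induction t using TensorProduct.induction_on with
  | zero => simp
  | tmul x y => simp [TensorProduct.assoc_symm_tmul]
  | add u v hu hv => simp [TensorProduct.tmul_add, hu, hv]

lemma KEY4 (c e : A) :
    TensorProduct.lift H.T2 (rTensor A H.S (H.T3 c e)) = H.S e ⊗ₜ[ℂ] c := by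
  refine ndLt H fun z => ?_
  have hM1 : rTensor A ((mul' ℂ A) ∘ₗ rTensor A H.S) (rTensor A (H.T3.flip e) (H.T1 c z))
      = H.S e ⊗ₜ[ℂ] (c * z) := by
    rw [rt_rt]
    have : (mul' ℂ A ∘ₗ rTensor A H.S) ∘ₗ H.T3.flip e = (H.counit).smulRight (H.S e) :=
      LinearMap.ext fun p => by
        simp only [LinearMap.comp_apply, LinearMap.flip_apply, LinearMap.smulRight_apply]
        exact SA3 H p e
    rw [this, smulRight_rTensor, H.counit_T1]
  have hM2 : rTensor A ((mul' ℂ A) ∘ₗ rTensor A H.S) (rTensor A (H.T3.flip e) (H.T1 c z))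
      = lTensor A (mr z) (TensorProduct.lift H.T2 (rTensor A H.S (H.T3 c e))) := by
    have hX : rTensor A (H.T3.flip e) (H.T1 c z)
        = (TensorProduct.assoc ℂ A A A).symm (lTensor A (H.T1.flip z) (H.T3 c e)) := by
      rw [← CA2 H, LinearEquiv.symm_apply_apply]
    rw [hX]
    generalize H.T3 c e = s
    induction s using TensorProduct.induction_on with
    | zero => simp
    | tmul p q =>
        rw [lTensor_tmul, LinearMap.flip_apply, kappa_tmul H, EL10 H, rTensor_tmul,
          TensorProduct.lift.tmul]
    | add u v hu hv => simp only [map_add, hu, hv]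
  rw [← hM2, hM1]
  simp [TensorProduct.tmul_add]

lemma LT2M (a₀ : A) (s : A ⊗[ℂ] A) :
    TensorProduct.lift H.T2 (lTensor A (mr a₀) s) = (H.Δ a₀).R (TensorProduct.lift H.T2 s) := by
  induction s using TensorProduct.induction_on with
  | zero => simp
  | tmul p q => simp only [lTensor_tmul, TensorProduct.lift.tmul, mulRight_apply]; exact EL8 H p q a₀
  | add u v hu hv => simp [hu, hv]

lemma KEY (c e a₀ : A) :
    TensorProduct.lift H.T2 (rTensor A H.S ((H.Δ c).L (e ⊗ₜ[ℂ] a₀)))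
      = (H.Δ a₀).R (H.S e ⊗ₜ[ℂ] c) := by
  rw [← EL1 H, ← ltrt, LT2M H, KEY4 H]

lemma INT2 {φ : A →ₗ[ℂ] ℂ} (hφ : IsLeftIntegral H φ) (s : A ⊗[ℂ] A) :
    sliceR φ (TensorProduct.lift H.T2 s) = sliceR φ s := by
  induction s using TensorProduct.induction_on with
  | zero => simp
  | tmul b a => rw [TensorProduct.lift.tmul, hφ.2.2 a b, sliceR_tmul]
  | add u v hu hv => simp [hu, hv]

lemma starChain {φ : A →ₗ[ℂ] ℂ} (hφ : IsLeftIntegral H φ) (c e a₀ : A) :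
    sliceR φ (rTensor A H.S ((H.Δ c).L (e ⊗ₜ[ℂ] a₀)))
      = H.S e * sliceR φ (H.T4 c a₀) := by
  rw [← INT2 H hφ, KEY H, ← EL3 H, sliceR_rTensor, mulLeft_apply]

end HopfLemmas

section PairingLemmas

variable {A B : Type*} [NonUnitalRing A] [Module ℂ A] [SMulCommClass ℂ A A]
  [IsScalarTower ℂ A A] [NonUnitalRing B] [Module ℂ B] [SMulCommClass ℂ B B]
  [IsScalarTower ℂ B B]
  {HA : RegMultHopf (A := A)} {HB : RegMultHopf (A := B)}
  (P : MHAPairing HA HB)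

local notation "ml" => LinearMap.mulLeft ℂ
local notation "mr" => LinearMap.mulRight ℂ

lemma nd2 {A' : Type*} [NonUnitalRing A'] [Module ℂ A'] [SMulCommClass ℂ A' A']
    [IsScalarTower ℂ A' A'] (H : RegMultHopf (A := A')) {a a' : A'}
    (h : ∀ w, w * a = w * a') : a = a' :=
  sub_eq_zero.mp (H.nondegR _ fun w => by rw [mul_sub, h, sub_self])

lemma sliceR_addf {Y Z : Type*} [AddCommGroup Y] [Module ℂ Y] [AddCommGroup Z] [Module ℂ Z]
    (f g : Z →ₗ[ℂ] ℂ) (t : Y ⊗[ℂ] Z) : sliceR (f + g) t = sliceR f t + sliceR g t := by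
  induction t using TensorProduct.induction_on with
  | zero => simp
  | tmul x y => simp [add_smul]
  | add u v hu hv =>
      simp only [map_add, hu, hv]
      abel

lemma sliceR_smulf {Y Z : Type*} [AddCommGroup Y] [Module ℂ Y] [AddCommGroup Z] [Module ℂ Z]
    (c : ℂ) (f : Z →ₗ[ℂ] ℂ) (t : Y ⊗[ℂ] Z) : sliceR (c • f) t = c • sliceR f t := by
  induction t using TensorProduct.induction_on with
  | zero => simp
  | tmul x y => simp [smul_smul]
  | add u v hu hv => simp only [map_add, hu, hv, smul_add]

lemma sliceL_addf {Y Z : Type*} [AddCommGroup Y] [Module ℂ Y] [AddCommGroup Z] [Module ℂ Z]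
    (f g : Z →ₗ[ℂ] ℂ) (t : Z ⊗[ℂ] Y) : sliceL (f + g) t = sliceL f t + sliceL g t := by
  induction t using TensorProduct.induction_on with
  | zero => simp
  | tmul x y => simp [add_smul]
  | add u v hu hv =>
      simp only [map_add, hu, hv]
      abel

lemma sliceL_smulf {Y Z : Type*} [AddCommGroup Y] [Module ℂ Y] [AddCommGroup Z] [Module ℂ Z]
    (c : ℂ) (f : Z →ₗ[ℂ] ℂ) (t : Z ⊗[ℂ] Y) : sliceL (c • f) t = c • sliceL f t := by
  induction t using TensorProduct.induction_on with
  | zero => simp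
  | tmul x y => simp [smul_smul]
  | add u v hu hv => simp only [map_add, hu, hv, smul_add]

/-- `x' ↦ (ι ⊗ ⟨·, x'⟩)(t)` as a linear map. -/
def srf (t : A ⊗[ℂ] A) : B →ₗ[ℂ] A where
  toFun x' := sliceR (P.β.flip x') t
  map_add' x y := by
    show sliceR (P.β.flip (x + y)) t = _
    rw [map_add, sliceR_addf]
  map_smul' c x := by
    show sliceR (P.β.flip (c • x)) t = _
    rw [map_smul, sliceR_smulf]
    rfl

@[simp] lemma srf_apply (t : A ⊗[ℂ] A) (x' : B) : srf P t x' = sliceR (P.β.flip x') t := rfl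

/-- `y ↦ (⟨y, ·⟩ ⊗ ι)(u)` as a linear map. -/
def slf (u : B ⊗[ℂ] B) : A →ₗ[ℂ] B where
  toFun y := sliceL (P.β y) u
  map_add' x y := by
    show sliceL (P.β (x + y)) u = _
    rw [map_add, sliceL_addf]
  map_smul' c x := by
    show sliceL (P.β (c • x)) u = _
    rw [map_smul, sliceL_smulf]
    rfl

@[simp] lemma slf_apply (u : B ⊗[ℂ] B) (y : A) : slf P u y = sliceL (P.β y) u := rfl

/-- `s ↦ (ι ⊗ ⟨s, ·⟩)(u)` as a linear map. -/
def psr (u : A ⊗[ℂ] B) : A →ₗ[ℂ] A where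
  toFun s := sliceR (P.β s) u
  map_add' x y := by
    show sliceR (P.β (x + y)) u = _
    rw [map_add, sliceR_addf]
  map_smul' c x := by
    show sliceR (P.β (c • x)) u = _
    rw [map_smul, sliceR_smulf]
    rfl

@[simp] lemma psr_apply (u : A ⊗[ℂ] B) (s : A) : psr P u s = sliceR (P.β s) u := rfl

lemma SLB (q : A) (b b' : B) : sliceL (P.β q) (HB.T1 b b') = P.rB b q * b' := by
  refine nd2 HB fun c => ?_
  have h1 : c * sliceL (P.β q) (HB.T1 b b')
      = sliceL (P.β q) (lTensor B (ml c) (HB.T1 b b')) := by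
    rw [sliceL_lTensor, mulLeft_apply]
  rw [h1, E5 HB, sliceL_lTensor, mulRight_apply, P.rB_leg, mul_assoc]

lemma CP6' (q s : A) (b b' : B) :
    P.β (q * P.lB b' s) b = P.β s (sliceL (P.β q) (HB.T1 b b')) := by
  rw [SLB, P.dual3, ← P.dual2]

lemma lB_hat (φ : A →ₗ[ℂ] ℂ) (hat : A ≃ₗ[ℂ] B)
    (hhat : ∀ c a' : A, P.β a' (hat c) = φ (c * a')) (c a₀ : A) :
    P.lB (hat c) a₀ = sliceR φ (HA.T4 c a₀) := by
  refine nd1 HA fun c₀ => ?_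
  have hfun : P.β.flip (hat c) = φ ∘ₗ ml c := LinearMap.ext fun y => by
    simp only [LinearMap.flip_apply, LinearMap.comp_apply, mulLeft_apply]
    exact hhat c y
  rw [← P.lB_leg, hfun, ← sliceR_lTensor, E1 HA, sliceR_rTensor, mulRight_apply]

lemma SL1 (a' p q : A) (b : B) :
    sliceR (P.β.flip b) ((HA.Δ a').L (p ⊗ₜ[ℂ] q)) = P.lB (P.lA q b) a' * p := by
  rw [← EL1 HA, sliceR_lTensor]
  have hfun : (P.β.flip b) ∘ₗ mr q = P.β.flip (P.lA q b) := LinearMap.ext fun y => by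
    simp only [LinearMap.comp_apply, mulRight_apply, LinearMap.flip_apply]
    exact P.dual4 q y b
  rw [hfun, P.lB_leg]

lemma ndSliceA {t t' : A ⊗[ℂ] A}
    (h : ∀ b'' : B, sliceR (P.β.flip b'') t = sliceR (P.β.flip b'') t') : t = t' := by
  have : t - t' = 0 := by
    refine sliceR_family_eq_zero (fun b'' : B => P.β.flip b'')
      (fun z hz => P.nondegA z fun b => by simpa using hz b) _ fun b'' => ?_
    rw [map_sub, h, sub_self]
  exact sub_eq_zero.mp this

lemma ndSliceAB {t t' : A ⊗[ℂ] B}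
    (h : ∀ a₀ : A, sliceR (P.β a₀) t = sliceR (P.β a₀) t') : t = t' := by
  have : t - t' = 0 := by
    refine sliceR_family_eq_zero (fun a₀ : A => P.β a₀)
      (fun z hz => P.nondegB z fun a => hz a) _ fun a₀ => ?_
    rw [map_sub, h, sub_self]
  exact sub_eq_zero.mp this

lemma EL11 (b' : B) (a₀ c₀ : A) :
    HA.T3 (P.lB b' a₀) c₀ = lTensor A (P.lB b') (HA.T3 a₀ c₀) := by
  refine ndSliceA P fun b'' => ?_
  have hfun : (P.β.flip b'') ∘ₗ (P.lB b') = P.β.flip (b'' * b') := LinearMap.ext fun y => by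
    simp only [LinearMap.comp_apply, LinearMap.flip_apply]
    exact (P.dual2 y b' b'').symm
  rw [sliceR_lTensor, hfun, P.lB_leg, P.lB_leg, P.lB_act]

lemma sliceR_zerof {Y Z : Type*} [AddCommGroup Y] [Module ℂ Y] [AddCommGroup Z] [Module ℂ Z]
    (t : Y ⊗[ℂ] Z) : sliceR (0 : Z →ₗ[ℂ] ℂ) t = 0 := by
  induction t using TensorProduct.induction_on with
  | zero => simp
  | tmul x y => simp
  | add u v hu hv => simp only [map_add, hu, hv, add_zero]

lemma GSWAP (s : A) (t : A ⊗[ℂ] A) (u : B ⊗[ℂ] B) :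
    sliceR (P.β s) (rTensor B (srf P t) u) = sliceR ((P.β s) ∘ₗ (slf P u)) t := by
  induction u using TensorProduct.induction_on with
  | zero =>
      have h0 : (P.β s) ∘ₗ slf P (0 : B ⊗[ℂ] B) = 0 := LinearMap.ext fun y => by simp [slf]
      rw [map_zero, map_zero, h0, sliceR_zerof]
  | tmul x' y' =>
      have hfun : (P.β s) ∘ₗ slf P (x' ⊗ₜ[ℂ] y') = (P.β s y') • (P.β.flip x') :=
        LinearMap.ext fun y => by
          simp only [LinearMap.comp_apply, slf_apply, sliceL_tmul, map_smul,
            LinearMap.smul_apply, LinearMap.flip_apply, smul_eq_mul]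
          ring
      rw [rTensor_tmul, sliceR_tmul, hfun, sliceR_smulf, srf_apply]
  | add u₁ u₂ h₁ h₂ =>
      have hslf : (P.β s) ∘ₗ slf P (u₁ + u₂) = (P.β s) ∘ₗ slf P u₁ + (P.β s) ∘ₗ slf P u₂ :=
        LinearMap.ext fun y => by simp [slf]
      rw [map_add, map_add, h₁, h₂, hslf, sliceR_addf]

lemma CP3 (s a' : A) (b b' : B) :
    P.lB (P.lA (P.lB b' s) b) a'
      = sliceR (P.β s) (rTensor B (P.lB.flip a') (HB.T1 b b')) := by
  refine nd1 HA fun c₀ => ?_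
  have hfun1 : P.β.flip (P.lA (P.lB b' s) b) = (P.β.flip b) ∘ₗ mr (P.lB b' s) :=
    LinearMap.ext fun y => by
      simp only [LinearMap.flip_apply, LinearMap.comp_apply, mulRight_apply]
      exact (P.dual4 (P.lB b' s) y b).symm
  have hfun2 : (P.β.flip b) ∘ₗ mr (P.lB b' s) = (P.β s) ∘ₗ (slf P (HB.T1 b b')) :=
    LinearMap.ext fun y => by
      simp only [LinearMap.comp_apply, mulRight_apply, LinearMap.flip_apply, slf_apply]
      exact CP6' P y s b b'
  have hfun3 : (mr c₀) ∘ₗ (P.lB.flip a') = srf P (HA.T3 a' c₀) :=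
    LinearMap.ext fun x' => by
      simp only [LinearMap.comp_apply, mulRight_apply, LinearMap.flip_apply, srf_apply]
      exact (P.lB_leg x' a' c₀).symm
  calc P.lB (P.lA (P.lB b' s) b) a' * c₀
      = sliceR (P.β.flip (P.lA (P.lB b' s) b)) (HA.T3 a' c₀) := (P.lB_leg _ _ _).symm
    _ = sliceR ((P.β s) ∘ₗ (slf P (HB.T1 b b'))) (HA.T3 a' c₀) := by rw [hfun1, hfun2]
    _ = sliceR (P.β s) (rTensor B (srf P (HA.T3 a' c₀)) (HB.T1 b b')) := (GSWAP P s _ _).symm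
    _ = sliceR (P.β s) (rTensor B ((mr c₀) ∘ₗ (P.lB.flip a')) (HB.T1 b b')) := by rw [hfun3]
    _ = sliceR (P.β s) (rTensor B (mr c₀) (rTensor B (P.lB.flip a') (HB.T1 b b'))) := by
        rw [rt_rt]
    _ = sliceR (P.β s) (rTensor B (P.lB.flip a') (HB.T1 b b')) * c₀ := by
        rw [sliceR_rTensor, mulRight_apply]

/-- The bilinear map `(p, q) ↦ (⟨q,·⟩b ▷ a') ⬝ p`. -/
def actA (b : B) (a' : A) : A →ₗ[ℂ] A →ₗ[ℂ] A :=
  LinearMap.mk₂ ℂ (fun p q => P.lB (P.lA q b) a' * p)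
    (fun p p' q => by simp only [mul_add])
    (fun c p q => by simp only [mul_smul_comm])
    (fun p q q' => by simp only [map_add, LinearMap.add_apply, add_mul])
    (fun c p q => by simp only [map_smul, LinearMap.smul_apply, smul_mul_assoc])

lemma step_actA (b : B) (a' : A) (s : A ⊗[ℂ] A) :
    sliceR (P.β.flip b) ((HA.Δ a').L s) = TensorProduct.lift (actA P b a') s := by
  induction s using TensorProduct.induction_on with
  | zero => simp
  | tmul p q =>
      rw [TensorProduct.lift.tmul]
      exact SL1 P a' p q b
  | add u v hu hv => simp only [map_add, hu, hv]

/-- The bilinear map `(p, s) ↦ ((ι ⊗ ⟨s,·⟩)u) ⬝ p`. -/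
def lam2 (u : A ⊗[ℂ] B) : A →ₗ[ℂ] A →ₗ[ℂ] A :=
  LinearMap.mk₂ ℂ (fun p s => psr P u s * p)
    (fun p p' s => by simp only [mul_add])
    (fun c p s => by simp only [mul_smul_comm])
    (fun p s s' => by simp only [map_add, add_mul])
    (fun c p s => by simp only [map_smul, smul_mul_assoc])

/-- The bilinear map `(x, y) ↦ x ⬝ (ι ⊗ ⟨·,y⟩)t`. -/
def th2 (t : A ⊗[ℂ] A) : A →ₗ[ℂ] B →ₗ[ℂ] A :=
  LinearMap.mk₂ ℂ (fun x y => x * srf P t y)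
    (fun x x' y => by simp only [add_mul])
    (fun c x y => by simp only [smul_mul_assoc])
    (fun x y y' => by simp only [map_add, mul_add])
    (fun c x y => by simp only [map_smul, mul_smul_comm])

lemma lift_add' {X Y Z : Type*} [AddCommGroup X] [Module ℂ X] [AddCommGroup Y] [Module ℂ Y]
    [AddCommGroup Z] [Module ℂ Z] {Θ Θ₁ Θ₂ : X →ₗ[ℂ] Y →ₗ[ℂ] Z}
    (h : ∀ x y, Θ x y = Θ₁ x y + Θ₂ x y) (s : X ⊗[ℂ] Y) :
    TensorProduct.lift Θ s = TensorProduct.lift Θ₁ s + TensorProduct.lift Θ₂ s := by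
  induction s using TensorProduct.induction_on with
  | zero => simp
  | tmul x y => simp [h]
  | add u v hu hv =>
      simp only [map_add, hu, hv]
      abel

lemma SWAP (t : A ⊗[ℂ] A) (u : A ⊗[ℂ] B) :
    TensorProduct.lift (lam2 P u) t = TensorProduct.lift (th2 P t) u := by
  induction t using TensorProduct.induction_on with
  | zero =>
      have h0 : ∀ x y, th2 P (0 : A ⊗[ℂ] A) x y = 0 := fun x y => by
        simp [th2, srf, sliceR]
      rw [map_zero]
      exact (by
        induction u using TensorProduct.induction_on with
        | zero => simp
        | tmul x y => rw [TensorProduct.lift.tmul, h0]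
        | add u₁ u₂ h₁ h₂ => rw [map_add, ← h₁, ← h₂, add_zero] : (0 : A)
          = TensorProduct.lift (th2 P 0) u)
  | tmul p s =>
      rw [TensorProduct.lift.tmul]
      induction u using TensorProduct.induction_on with
      | zero => simp [lam2, psr, sliceR]
      | tmul x y =>
          rw [TensorProduct.lift.tmul]
          simp only [lam2, th2, LinearMap.mk₂_apply, psr_apply, srf_apply, sliceR_tmul,
            LinearMap.flip_apply, smul_mul_assoc, mul_smul_comm]
      | add u₁ u₂ h₁ h₂ =>
          rw [map_add]
          have : lam2 P (u₁ + u₂) p s = lam2 P u₁ p s + lam2 P u₂ p s := by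
            simp only [lam2, LinearMap.mk₂_apply, psr_apply, map_add, add_mul]
          rw [this, h₁, h₂]
  | add t₁ t₂ h₁ h₂ =>
      rw [map_add, h₁, h₂]
      refine (lift_add' (fun x y => ?_) u).symm
      simp only [th2, LinearMap.mk₂_apply, srf_apply, map_add, mul_add]

/-- The module-algebra property of the dual action. -/
lemma COMPAT (b b' : B) (a' a₀ : A) :
    P.lB b (a' * P.lB b' a₀)
      = TensorProduct.lift (actPair (LinearMap.mul ℂ A) P.lB a' a₀) (HB.T1 b b') := by
  refine nd1 HA fun c₀ => ?_
  calc P.lB b (a' * P.lB b' a₀) * c₀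
      = sliceR (P.β.flip b) (HA.T3 (a' * P.lB b' a₀) c₀) := (P.lB_leg _ _ _).symm
    _ = sliceR (P.β.flip b) ((HA.Δ a').L (HA.T3 (P.lB b' a₀) c₀)) := by rw [EL6 HA]
    _ = TensorProduct.lift (actA P b a') (HA.T3 (P.lB b' a₀) c₀) := step_actA P b a' _
    _ = TensorProduct.lift (actA P b a') (lTensor A (P.lB b') (HA.T3 a₀ c₀)) := by
        rw [EL11 P]
    _ = TensorProduct.lift ((actA P b a').compl₂ (P.lB b')) (HA.T3 a₀ c₀) :=
        lift_lTensor _ _ _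
    _ = TensorProduct.lift (lam2 P (rTensor B (P.lB.flip a') (HB.T1 b b')))
          (HA.T3 a₀ c₀) := by
        refine lift_congr (fun p s => ?_) _
        simp only [LinearMap.compl₂_apply, actA, lam2, LinearMap.mk₂_apply, psr_apply]
        rw [CP3 P s a' b b']
    _ = TensorProduct.lift (th2 P (HA.T3 a₀ c₀)) (rTensor B (P.lB.flip a') (HB.T1 b b')) :=
        SWAP P _ _
    _ = TensorProduct.lift ((th2 P (HA.T3 a₀ c₀)) ∘ₗ (P.lB.flip a')) (HB.T1 b b') :=
        lift_rTensor _ _ _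
    _ = TensorProduct.lift ((actPair (LinearMap.mul ℂ A) P.lB a' a₀).compr₂ (mr c₀))
          (HB.T1 b b') := by
        refine lift_congr (fun x y => ?_) _
        simp only [LinearMap.comp_apply, LinearMap.flip_apply, th2, LinearMap.mk₂_apply,
          srf_apply, LinearMap.compr₂_apply, actPair, mulRight_apply, LinearMap.mul_apply']
        rw [P.lB_leg, mul_assoc]
    _ = TensorProduct.lift (actPair (LinearMap.mul ℂ A) P.lB a' a₀) (HB.T1 b b') * c₀ := by
        rw [← map_lift, mulRight_apply]

/-- The key slice formula for `γ`. -/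
lemma star_slice (φ : A →ₗ[ℂ] ℂ) (hφ : IsLeftIntegral HA φ) (hat : A ≃ₗ[ℂ] B)
    (hhat : ∀ c a' : A, P.β a' (hat c) = φ (c * a'))
    (γ : (A ⊗[ℂ] B) →ₗ[ℂ] A ⊗[ℂ] B)
    (hγ : ∀ a c : A, γ (a ⊗ₜ[ℂ] hat c)
      = TensorProduct.map HA.S hat.toLinearMap (HA.T3 c (HA.Sinv a)))
    (x : A) (e : B) (a₀ : A) :
    sliceR (P.β a₀) (γ (x ⊗ₜ[ℂ] e)) = x * P.lB e a₀ := by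
  obtain ⟨c, rfl⟩ : ∃ c, hat c = e := ⟨hat.symm e, hat.apply_symm_apply e⟩
  rw [hγ x c, sliceR_map]
  have hfun : (P.β a₀) ∘ₗ hat.toLinearMap = φ ∘ₗ mr a₀ := LinearMap.ext fun y => by
    simp only [LinearMap.comp_apply, LinearEquiv.coe_coe, mulRight_apply]
    exact hhat y a₀
  rw [hfun, ← sliceR_lTensor, ← sliceR_rTensor, EL1 HA, starChain HA hφ, HA.S_Sinv,
    lB_hat P φ hat hhat]

end PairingLemmas

end Prop67

end Prop67Aux

/-! ## STATEMENT 16 -/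

noncomputable section

/-- **Proposition 6.7.** Let `A` be an algebraic quantum group with left
integral `φ` and dual `Â` (axiomatised by a pairing `(A, B)` and the linear
bijection `hat : c ↦ φ(c ·)` from `A` onto `B`).  Let `A ◇ Â` be `A ⊗ Â`
with product `(a ◇ b)(a' ◇ b') = ⟨a', b⟩ a ◇ b'` (here `ν`).  Then the map
`γ : A # Â → A ◇ Â` with `γ(a # φ(c·)) = Σ aS(c₍₁₎) ◇ φ(c₍₂₎·)` is an
algebra isomorphism.  (In covered form,
`Σ aS(c₍₁₎) ⊗ hat(c₍₂₎) = (S ⊗ hat)(Δ(c)(S⁻¹(a) ⊗ 1))`.) -/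
theorem smash_with_dual_iso_diamond
    {A B : Type*} [NonUnitalRing A] [Module ℂ A] [SMulCommClass ℂ A A]
    [IsScalarTower ℂ A A] [NonUnitalRing B] [Module ℂ B] [SMulCommClass ℂ B B]
    [IsScalarTower ℂ B B]
    (HA : RegMultHopf (A := A)) (HB : RegMultHopf (A := B))
    (P : MHAPairing HA HB)
    (φ : A →ₗ[ℂ] ℂ) (hφ : IsLeftIntegral HA φ)
    (hat : A ≃ₗ[ℂ] B) (hhat : ∀ c a' : A, P.β a' (hat c) = φ (c * a'))
    (μAB : (A ⊗[ℂ] B) →ₗ[ℂ] (A ⊗[ℂ] B) →ₗ[ℂ] (A ⊗[ℂ] B))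
    (hμAB : IsSmashMul HB (LinearMap.mul ℂ A) P.lB μAB)
    (ν : (A ⊗[ℂ] B) →ₗ[ℂ] (A ⊗[ℂ] B) →ₗ[ℂ] (A ⊗[ℂ] B))
    (hν : ∀ (a a' : A) (b b' : B),
      ν (a ⊗ₜ[ℂ] b) (a' ⊗ₜ[ℂ] b') = P.β a' b • (a ⊗ₜ[ℂ] b'))
    (γ : (A ⊗[ℂ] B) →ₗ[ℂ] A ⊗[ℂ] B)
    (hγ : ∀ a c : A,
      γ (a ⊗ₜ[ℂ] hat c) =
        TensorProduct.map HA.S hat.toLinearMap (HA.T3 c (HA.Sinv a))) :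
    Function.Bijective γ ∧ ∀ u v : A ⊗[ℂ] B, γ (μAB u v) = ν (γ u) (γ v) := by
  classical
  have hstar := Prop67.star_slice P φ hφ hat hhat γ hγ
  constructor
  · -- bijectivity
    set E : (A ⊗[ℂ] B) ≃ₗ[ℂ] A ⊗[ℂ] B :=
      (TensorProduct.congr (LinearEquiv.refl ℂ A) hat.symm).trans
        ((TensorProduct.comm ℂ A A).trans
          ((TensorProduct.congr (LinearEquiv.refl ℂ A)
              (LinearEquiv.ofLinear HA.Sinv HA.S (LinearMap.ext HA.Sinv_S)
                (LinearMap.ext HA.S_Sinv))).trans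
            ((LinearEquiv.ofBijective (TensorProduct.lift HA.T3) HA.T3_bij).trans
              (TensorProduct.congr
                (LinearEquiv.ofLinear HA.S HA.Sinv (LinearMap.ext HA.S_Sinv)
                  (LinearMap.ext HA.Sinv_S)) hat)))) with hEdef
    have hgE : γ = (E : (A ⊗[ℂ] B) →ₗ[ℂ] A ⊗[ℂ] B) := by
      apply TensorProduct.ext'
      intro a b
      obtain ⟨c, rfl⟩ : ∃ c, hat c = b := ⟨hat.symm b, hat.apply_symm_apply b⟩
      rw [hγ a c]
      show _ = E (a ⊗ₜ[ℂ] hat c)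
      rw [hEdef]
      simp only [LinearEquiv.trans_apply, TensorProduct.congr_tmul, LinearEquiv.refl_apply,
        hat.symm_apply_apply, TensorProduct.comm_tmul, LinearEquiv.ofLinear_apply,
        LinearEquiv.ofBijective_apply, TensorProduct.lift.tmul]
      rfl
    rw [hgE]
    exact E.bijective
  · -- multiplicativity
    have hNU : ∀ (a₀ : A) (t w : A ⊗[ℂ] B),
        sliceR (P.β a₀) (ν t w) = sliceR (P.β (sliceR (P.β a₀) w)) t := by
      intro a₀ t w
      induction w using TensorProduct.induction_on with
      | zero => simp [Prop67.sliceR_zerof]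
      | tmul y f =>
          induction t using TensorProduct.induction_on with
          | zero => simp
          | tmul x e => rw [hν x y e f]; simp [smul_smul, mul_comm]
          | add t₁ t₂ ht₁ ht₂ => simp only [map_add, LinearMap.add_apply, ht₁, ht₂]
      | add w₁ w₂ h₁ h₂ =>
          simp only [map_add, h₁, h₂, Prop67.sliceR_addf]
    have key : ∀ (a : A) (b : B) (a' : A) (b' : B),
        γ (μAB (a ⊗ₜ[ℂ] b) (a' ⊗ₜ[ℂ] b')) = ν (γ (a ⊗ₜ[ℂ] b)) (γ (a' ⊗ₜ[ℂ] b')) := by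
      intro a b a' b'
      refine Prop67.ndSliceAB P fun a₀ => ?_
      calc sliceR (P.β a₀) (γ (μAB (a ⊗ₜ[ℂ] b) (a' ⊗ₜ[ℂ] b')))
          = sliceR (P.β a₀) (γ (TensorProduct.lift
              (smashPair (LinearMap.mul ℂ A) P.lB a a') (HB.T1 b b'))) := by
            rw [hμAB a a' b b']
        _ = TensorProduct.lift
              (((smashPair (LinearMap.mul ℂ A) P.lB a a').compr₂ γ).compr₂
                (sliceR (P.β a₀))) (HB.T1 b b') := by
            rw [Prop67.map_lift, Prop67.map_lift]
        _ = TensorProduct.lift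
              ((actPair (LinearMap.mul ℂ A) P.lB a' a₀).compr₂
                (LinearMap.mulLeft ℂ a)) (HB.T1 b b') := by
            refine Prop67.lift_congr (fun p q => ?_) _
            simp only [LinearMap.compr₂_apply, smashPair, actPair, LinearMap.mk₂_apply,
              LinearMap.mul_apply', LinearMap.mulLeft_apply]
            rw [hstar, mul_assoc]
        _ = a * TensorProduct.lift (actPair (LinearMap.mul ℂ A) P.lB a' a₀)
              (HB.T1 b b') := by
            rw [← Prop67.map_lift, LinearMap.mulLeft_apply]
        _ = a * P.lB b (a' * P.lB b' a₀) := by rw [← Prop67.COMPAT P]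
        _ = sliceR (P.β (a' * P.lB b' a₀)) (γ (a ⊗ₜ[ℂ] b)) := (hstar a b _).symm
        _ = sliceR (P.β (sliceR (P.β a₀) (γ (a' ⊗ₜ[ℂ] b')))) (γ (a ⊗ₜ[ℂ] b)) := by
            rw [hstar a' b' a₀]
        _ = sliceR (P.β a₀) (ν (γ (a ⊗ₜ[ℂ] b)) (γ (a' ⊗ₜ[ℂ] b'))) := (hNU a₀ _ _).symm
    intro u v
    induction u using TensorProduct.induction_on with
    | zero => simp
    | tmul a b =>
        induction v using TensorProduct.induction_on with
        | zero => simp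
        | tmul a' b' => exact key a b a' b'
        | add v₁ v₂ h₁ h₂ => simp only [map_add, h₁, h₂]
    | add u₁ u₂ h₁ h₂ => simp only [map_add, LinearMap.add_apply, h₁, h₂]

end
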